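/- arXiv:1801.00852 — 2 statements merged into one kernel-verified Lean document; each statement's English description precedes it below -/
import Mathlib

section
/- In the grid-type partition of ℝ^d into m = m_0^d hyperrectangles (each coordinate split into m_0 intervals, possibly adaptively), the number of hyperrectangles contained in [-R, R]^d whose j-th edge has length at least m^{-(2d+1)/(2d(d+1))} is at most 2·R·m^{(2d+1)/(2d(d+1))}·m^{(d-1)/d} = 2·R·m^{(2d²+2d-1)/(2d²+2d)}. Consequently, the number of hyperrectangles contained in [-R,R]^d with maximal edge length at least m^{-(2d+1)/(2d(d+1))} is at most 2·d·R·m^{(2d²+2d-1)/(2d²+2d)}. -/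
open scoped Classical

/-- Counting lemma: disjoint Ioc intervals of length ≥ ℓ inside [-R,R]. -/
lemma count_disjoint_intervals {ι : Type*} (S : Finset ι) (a b : ι → ℝ) (R ℓ : ℝ)
    (hℓ : 0 < ℓ) (hR : 0 ≤ R)
    (hsub : ∀ κ ∈ S, Set.Ioc (a κ) (b κ) ⊆ Set.Icc (-R) R)
    (hlen : ∀ κ ∈ S, ℓ ≤ b κ - a κ)
    (hdisj : (↑S : Set ι).Pairwise (Function.onFun Disjoint fun κ => Set.Ioc (a κ) (b κ))) :
    (S.card : ℝ) * ℓ ≤ 2 * R := by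
  have hsum : ∑ κ ∈ S, (b κ - a κ) ≤ 2 * R := by
    have hmeas : ∑ κ ∈ S, MeasureTheory.volume (Set.Ioc (a κ) (b κ)) =
        MeasureTheory.volume (⋃ κ ∈ S, Set.Ioc (a κ) (b κ)) :=
      (MeasureTheory.measure_biUnion_finset hdisj (fun κ _ => measurableSet_Ioc)).symm
    have hle : MeasureTheory.volume (⋃ κ ∈ S, Set.Ioc (a κ) (b κ)) ≤
        MeasureTheory.volume (Set.Icc (-R) R) := by
      apply MeasureTheory.measure_mono
      exact Set.iUnion₂_subset hsub
    rw [Real.volume_Icc] at hle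
    have : ∑ κ ∈ S, ENNReal.ofReal (b κ - a κ) ≤ ENNReal.ofReal (R - (-R)) := by
      simpa [Real.volume_Ioc] using hmeas.le.trans hle
    rw [← ENNReal.ofReal_sum_of_nonneg (fun κ hκ => le_of_lt (hℓ.trans_le (hlen κ hκ)))] at this
    have h2R : R - (-R) = 2 * R := by ring
    rw [h2R] at this
    exact (ENNReal.ofReal_le_ofReal_iff (by linarith)).mp this
  calc (S.card : ℝ) * ℓ = ∑ _κ ∈ S, ℓ := by rw [Finset.sum_const, nsmul_eq_mul]
    _ ≤ ∑ κ ∈ S, (b κ - a κ) := Finset.sum_le_sum hlen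
    _ ≤ 2 * R := hsum

/-- counting cells of a grid-type partition of ℝ^d into m = m0^d
hyperrectangles (cells indexed by κ : Fin d → Fin m0, cell κ = ∏_j (a κ j, b κ j])
that are contained in [-R,R]^d and whose j-th edge (resp. maximal edge) has length at
least m^{-(2d+1)/(2d(d+1))}. Cells agreeing in all coordinates other than j have
disjoint j-th intervals. -/
theorem stmt_15 (d m0 : ℕ) (hd : 0 < d) (hm0 : 0 < m0) (R : ℝ) (hR : 0 < R)
    (a b : (Fin d → Fin m0) → Fin d → ℝ)
    (hab : ∀ κ j, a κ j < b κ j)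
    (hdisj : ∀ j : Fin d, ∀ κ κ' : Fin d → Fin m0, κ ≠ κ' →
      (∀ i, i ≠ j → κ i = κ' i) →
      Disjoint (Set.Ioc (a κ j) (b κ j)) (Set.Ioc (a κ' j) (b κ' j))) :
    (∀ j : Fin d,
      ((Finset.univ.filter (fun κ : Fin d → Fin m0 =>
          (∀ i, Set.Ioc (a κ i) (b κ i) ⊆ Set.Icc (-R) R) ∧
          ((m0 : ℝ) ^ d) ^ (-(2 * (d : ℝ) + 1) / (2 * d * (d + 1))) ≤ b κ j - a κ j)).card : ℝ) ≤
        2 * R * ((m0 : ℝ) ^ d) ^ ((2 * (d : ℝ) ^ 2 + 2 * d - 1) / (2 * d ^ 2 + 2 * d))) ∧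
    ((Finset.univ.filter (fun κ : Fin d → Fin m0 =>
        (∀ i, Set.Ioc (a κ i) (b κ i) ⊆ Set.Icc (-R) R) ∧
        ∃ j, ((m0 : ℝ) ^ d) ^ (-(2 * (d : ℝ) + 1) / (2 * d * (d + 1))) ≤ b κ j - a κ j)).card : ℝ) ≤
      2 * d * R * ((m0 : ℝ) ^ d) ^ ((2 * (d : ℝ) ^ 2 + 2 * d - 1) / (2 * d ^ 2 + 2 * d)) := by
  set M : ℝ := (m0 : ℝ) ^ d with hM
  have hM1 : (1 : ℝ) ≤ M := one_le_pow₀ (by exact_mod_cast hm0)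
  have hM0 : (0 : ℝ) < M := lt_of_lt_of_le one_pos hM1
  set e1 : ℝ := -(2 * (d : ℝ) + 1) / (2 * d * (d + 1)) with he1
  set E : ℝ := (2 * (d : ℝ) ^ 2 + 2 * d - 1) / (2 * d ^ 2 + 2 * d) with hE
  set ℓ : ℝ := M ^ e1 with hℓdef
  have hℓpos : 0 < ℓ := Real.rpow_pos_of_pos hM0 e1
  have hdR : (0:ℝ) < (d:ℝ) := by exact_mod_cast hd
  -- key algebraic identity:  m0^(d-1) * (2R / ℓ) = 2R * M^E
  have halg : ((m0 : ℝ) ^ (d - 1)) * (2 * R / ℓ) = 2 * R * M ^ E := by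
    have h1 : ((m0 : ℝ) ^ (d - 1)) = M ^ (((d : ℝ) - 1) / d) := by
      rw [hM, ← Real.rpow_natCast ((m0:ℝ)) d, ← Real.rpow_natCast ((m0:ℝ)) (d-1),
        ← Real.rpow_mul (by positivity)]
      congr 1
      have : ((d - 1 : ℕ) : ℝ) = (d : ℝ) - 1 := by
        rw [Nat.cast_sub hd]; simp
      rw [this]
      field_simp
    have h2 : ℓ⁻¹ = M ^ (-e1) := by
      rw [hℓdef, ← Real.rpow_neg hM0.le]
    have h3 : M ^ (((d : ℝ) - 1) / d) * M ^ (-e1) = M ^ E := by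
      rw [← Real.rpow_add hM0]
      congr 1
      rw [hE, he1]
      have hd1 : (d : ℝ) + 1 ≠ 0 := by positivity
      field_simp
      ring
    rw [div_eq_mul_inv, h1, h2]
    rw [show M ^ (((d:ℝ)-1)/d) * (2 * R * (M ^ (-e1))) =
      2 * R * (M ^ (((d:ℝ)-1)/d) * M ^ (-e1)) by ring, h3]
  have key : ∀ j : Fin d,
      ((Finset.univ.filter (fun κ : Fin d → Fin m0 =>
          (∀ i, Set.Ioc (a κ i) (b κ i) ⊆ Set.Icc (-R) R) ∧
          ℓ ≤ b κ j - a κ j)).card : ℝ) ≤ 2 * R * M ^ E := by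
    intro j
    set S := Finset.univ.filter (fun κ : Fin d → Fin m0 =>
          (∀ i, Set.Ioc (a κ i) (b κ i) ⊆ Set.Icc (-R) R) ∧
          ℓ ≤ b κ j - a κ j) with hS
    set z : Fin m0 := ⟨0, hm0⟩
    set proj : (Fin d → Fin m0) → (Fin d → Fin m0) := fun κ => Function.update κ j z with hproj
    -- fiber bound
    have hfiber : ∀ f, (((S.filter (fun κ => proj κ = f)).card : ℝ)) ≤ 2 * R / ℓ := by
      intro f
      have := count_disjoint_intervals (S.filter (fun κ => proj κ = f))
        (fun κ => a κ j) (fun κ => b κ j) R ℓ hℓpos hR.le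
        (by
          intro κ hκ
          have h := (Finset.mem_filter.mp (Finset.mem_filter.mp hκ).1).2
          exact h.1 j)
        (by
          intro κ hκ
          have h := (Finset.mem_filter.mp (Finset.mem_filter.mp hκ).1).2
          exact h.2)
        (by
          intro κ hκ κ' hκ' hne
          simp only [Finset.coe_filter, Set.mem_setOf_eq] at hκ hκ'
          refine hdisj j κ κ' hne (fun i hi => ?_)
          have h := congrFun (hκ.2.trans hκ'.2.symm) i
          simpa [hproj, Function.update_of_ne hi] using h
        )
      rw [le_div_iff₀ hℓpos]
      linarith
    have hcard : (S.card : ℝ) ≤ ((m0 : ℝ) ^ (d - 1)) * (2 * R / ℓ) := by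
      have hsplit : S.card = ∑ f ∈ S.image proj, (S.filter (fun κ => proj κ = f)).card :=
        Finset.card_eq_sum_card_fiberwise (fun κ hκ => Finset.mem_image_of_mem proj hκ)
      have himg : ((S.image proj).card : ℝ) ≤ (m0 : ℝ) ^ (d - 1) := by
        have hinj : Set.InjOn (fun (f : Fin d → Fin m0) (i : {i : Fin d // i ≠ j}) => f i.val)
            ↑(S.image proj) := by
          intro f hf g hg hfg
          simp only [Finset.coe_image, Set.mem_image] at hf hg
          obtain ⟨κ, _, rfl⟩ := hf
          obtain ⟨κ', _, rfl⟩ := hg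
          funext i
          by_cases hi : i = j
          · subst hi; simp [hproj]
          · have h2 := congrFun hfg ⟨i, hi⟩
            simpa using h2
        have := Finset.card_le_card_of_injOn _ (fun f _ => Finset.mem_univ _) hinj
        have hne : Fintype.card {i : Fin d // i ≠ j} = d - 1 := by
          have h := Fintype.card_subtype_compl (fun i : Fin d => i = j)
          simpa [Fintype.card_subtype_eq] using h
        have hcardfun : Fintype.card ({i : Fin d // i ≠ j} → Fin m0) = m0 ^ (d - 1) := by
          rw [Fintype.card_fun, hne, Fintype.card_fin]
        calc ((S.image proj).card : ℝ) ≤ (Finset.univ : Finset ({i : Fin d // i ≠ j} → Fin m0)).card := by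
              exact_mod_cast this
          _ = (m0 : ℝ) ^ (d - 1) := by rw [Finset.card_univ, hcardfun]; push_cast; ring
      calc (S.card : ℝ) = ∑ f ∈ S.image proj, ((S.filter (fun κ => proj κ = f)).card : ℝ) := by
            rw [hsplit]; push_cast; ring
        _ ≤ ∑ _f ∈ S.image proj, (2 * R / ℓ) := Finset.sum_le_sum (fun f _ => hfiber f)
        _ = ((S.image proj).card : ℝ) * (2 * R / ℓ) := by rw [Finset.sum_const, nsmul_eq_mul]
        _ ≤ ((m0 : ℝ) ^ (d - 1)) * (2 * R / ℓ) := by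
            apply mul_le_mul_of_nonneg_right himg; positivity
    calc (S.card : ℝ) ≤ ((m0 : ℝ) ^ (d - 1)) * (2 * R / ℓ) := hcard
      _ = 2 * R * M ^ E := halg
  refine ⟨key, ?_⟩
  have hsub : (Finset.univ.filter (fun κ : Fin d → Fin m0 =>
        (∀ i, Set.Ioc (a κ i) (b κ i) ⊆ Set.Icc (-R) R) ∧
        ∃ j, ℓ ≤ b κ j - a κ j)) ⊆
      Finset.univ.biUnion (fun j : Fin d => Finset.univ.filter (fun κ : Fin d → Fin m0 =>
        (∀ i, Set.Ioc (a κ i) (b κ i) ⊆ Set.Icc (-R) R) ∧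
        ℓ ≤ b κ j - a κ j)) := by
    intro κ hκ
    simp only [Finset.mem_filter, Finset.mem_biUnion, Finset.mem_univ, true_and] at hκ ⊢
    obtain ⟨h1, j, h2⟩ := hκ
    exact ⟨j, h1, h2⟩
  calc ((Finset.univ.filter (fun κ : Fin d → Fin m0 =>
        (∀ i, Set.Ioc (a κ i) (b κ i) ⊆ Set.Icc (-R) R) ∧
        ∃ j, ℓ ≤ b κ j - a κ j)).card : ℝ)
      ≤ ((Finset.univ.biUnion (fun j : Fin d => Finset.univ.filter (fun κ : Fin d → Fin m0 =>
        (∀ i, Set.Ioc (a κ i) (b κ i) ⊆ Set.Icc (-R) R) ∧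
        ℓ ≤ b κ j - a κ j))).card : ℝ) := by
        exact_mod_cast Finset.card_le_card hsub
    _ ≤ ∑ j : Fin d, ((Finset.univ.filter (fun κ : Fin d → Fin m0 =>
        (∀ i, Set.Ioc (a κ i) (b κ i) ⊆ Set.Icc (-R) R) ∧
        ℓ ≤ b κ j - a κ j)).card : ℝ) := by
        exact_mod_cast Finset.card_biUnion_le
    _ ≤ ∑ _j : Fin d, (2 * R * M ^ E) := Finset.sum_le_sum (fun j _ => key j)
    _ = 2 * d * R * M ^ E := by
        rw [Finset.sum_const, nsmul_eq_mul, Finset.card_univ, Fintype.card_fin]; ring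
end

section
/- The growth function of the family 𝒜 of all partitions of ℝ^d produced by the recursive equal-empirical-measure partitioning algorithm (m = m_0^d cells, each of d rounds splitting every current cell into m_0 = m^{1/d} sub-cells along one coordinate) satisfies Δ*_{2n}(𝒜) ≤ ∏_{k=0}^{d-1} C(2n + m^{1/d}, m^{1/d})^{m^{k/d}}, i.e., log Δ*_{2n}(𝒜) ≤ (∑_{k=0}^{d-1} m^{k/d}) · log C(2n + m^{1/d}, m^{1/d}). -/
/-- A partition `π` of `ℝ^d` is an *adaptive grid partition* with `m0` slices per
coordinate if its cells are indexed by `κ : Fin d → Fin m0`, the cell of index `κ`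
being `∏_k (L k κ, U k κ]` (half-open interval with possibly infinite endpoints),
where the thresholds along coordinate `k` depend only on `κ i` for `i ≤ k`, the first
slice has lower endpoint `-∞`, the last slice has upper endpoint `+∞`, and consecutive
slices share endpoints.  This is the family of partitions produced by the recursive
equal-empirical-measure partitioning algorithm with arbitrary thresholds. -/
def IsAdaptiveGrid (d m0 : ℕ) (π : Set (Set (Fin d → ℝ))) : Prop :=
  ∃ L U : Fin d → (Fin d → Fin m0) → EReal,
    (∀ k κ κ', (∀ i, i ≤ k → κ i = κ' i) → L k κ = L k κ' ∧ U k κ = U k κ') ∧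
    (∀ k κ, (κ k : ℕ) = 0 → L k κ = ⊥) ∧
    (∀ k κ, (κ k : ℕ) = m0 - 1 → U k κ = ⊤) ∧
    (∀ k κ κ', (∀ i, i < k → κ i = κ' i) → (κ' k : ℕ) = (κ k : ℕ) + 1 → U k κ = L k κ') ∧
    (∀ k κ, L k κ ≤ U k κ) ∧
    π = Set.range (fun κ : Fin d → Fin m0 =>
      {x : Fin d → ℝ | ∀ k, L k κ < (x k : EReal) ∧ (x k : EReal) ≤ U k κ})

/-- Restriction of a cell index to the coordinates below `k`. -/
def preFn {d m0 : ℕ} (κ : Fin d → Fin m0) (k : Fin d) : Fin (k : ℕ) → Fin m0 :=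
  fun i => κ ⟨i, i.isLt.trans k.isLt⟩

/-- Extension of a prefix `p` below `k` by the value `j` at `k` and above. -/
def extFn {d m0 : ℕ} (k : Fin d) (p : Fin (k : ℕ) → Fin m0) (j : Fin m0) : Fin d → Fin m0 :=
  fun i => if h : (i : ℕ) < (k : ℕ) then p ⟨i, h⟩ else j

open Classical in
/-- Reconstruction of a trace partition from count data. -/
noncomputable def reconstruct (d m0 n : ℕ) (B : Finset (Fin d → ℝ))
    (c : ∀ k : Fin d, (Fin (k : ℕ) → Fin m0) → {c : Fin m0 → Fin (2 * n + 1) // Monotone c}) :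
    Set (Set (Fin d → ℝ)) :=
  Set.range (fun κ : Fin d → Fin m0 =>
    {x : Fin d → ℝ | x ∈ B ∧ ∀ k : Fin d,
      ((B.filter fun y => y k ≤ x k).card ≤ ((c k (preFn κ k)).1 (κ k) : ℕ)) ∧
      ∀ j : Fin m0, (j : ℕ) + 1 = (κ k : ℕ) →
        ¬ ((B.filter fun y => y k ≤ x k).card ≤ ((c k (preFn κ k)).1 j : ℕ))})

open Classical in
/-- The number of monotone maps `Fin m0 → Fin (N+1)` is at most `(N+m0).choose m0`. -/
lemma monoCard_le (m0 N : ℕ) :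
    Fintype.card {c : Fin m0 → Fin (N + 1) // Monotone c} ≤ (N + m0).choose m0 := by
  have hcard : Fintype.card {s : Finset (Fin (N + m0)) // s.card = m0} = (N + m0).choose m0 := by
    simp
  rw [← hcard]
  have hbnd : ∀ (c : {c : Fin m0 → Fin (N + 1) // Monotone c}) (j : Fin m0),
      ((c.1 j : ℕ) + (j : ℕ)) < N + m0 := by
    intro c j
    have h1 : (c.1 j : ℕ) < N + 1 := (c.1 j).isLt
    have h2 : (j : ℕ) < m0 := j.isLt
    omega
  set f : {c : Fin m0 → Fin (N + 1) // Monotone c} → Fin m0 → Fin (N + m0) :=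
    fun c j => ⟨(c.1 j : ℕ) + (j : ℕ), hbnd c j⟩ with hf
  have hsm : ∀ c, StrictMono (f c) := by
    intro c j j' hjj'
    have h1 : (c.1 j : ℕ) ≤ (c.1 j' : ℕ) := c.2 hjj'.le
    have h2 : (j : ℕ) < (j' : ℕ) := hjj'
    simp only [f, Fin.mk_lt_mk]
    omega
  apply Fintype.card_le_of_injective
    (fun c => ⟨Finset.image (f c) Finset.univ, by
      rw [Finset.card_image_of_injective _ (hsm c).injective, Finset.card_univ,
        Fintype.card_fin]⟩)
  intro c c' hcc'
  have himg : Set.range (f c) = Set.range (f c') := by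
    have := congrArg (fun s => (s.1 : Set (Fin (N + m0)))) hcc'
    simpa [Set.image_univ] using this
  haveI : WellFoundedLT (Fin m0) := inferInstance
  have hfeq : f c = f c' :=
    (StrictMono.range_inj (β := Fin m0) (γ := Fin (N + m0)) (hsm c) (hsm c')).mp himg
  ext j
  have := congrFun hfeq j
  simp only [f, Fin.mk.injEq] at this
  omega

open Classical in
/-- Rank characterization: for `x ∈ B`, `x k ≤ u` iff the number of points of `B` whose
`k`-th coordinate is at most `x k` does not exceed the number whose `k`-th coordinate is
at most `u`. -/
lemma rank_le_iff {d : ℕ} (B : Finset (Fin d → ℝ)) (k : Fin d) (u : EReal)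
    {x : Fin d → ℝ} (hx : x ∈ B) :
    ((x k : EReal) ≤ u ↔
      (B.filter fun y => y k ≤ x k).card ≤ (B.filter fun y => (y k : EReal) ≤ u).card) := by
  constructor
  · intro h
    apply Finset.card_le_card
    intro y hy
    simp only [Finset.mem_filter] at hy ⊢
    refine ⟨hy.1, le_trans ?_ h⟩
    exact_mod_cast hy.2
  · intro h
    by_contra hxu
    have hsub : (B.filter fun y => (y k : EReal) ≤ u) ⊆ B.filter fun y => y k < x k := by
      intro y hy
      simp only [Finset.mem_filter] at hy ⊢
      refine ⟨hy.1, ?_⟩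
      have : (y k : EReal) < (x k : EReal) := lt_of_le_of_lt hy.2 (not_le.mp hxu)
      exact_mod_cast this
    have hss : (B.filter fun y => y k < x k) ⊂ B.filter fun y => y k ≤ x k := by
      refine (Finset.ssubset_iff_of_subset
        (Finset.monotone_filter_right B (fun y _ hy => le_of_lt hy))).mpr ?_
      exact ⟨x, Finset.mem_filter.mpr ⟨hx, le_refl _⟩, by simp⟩
    have hlt := (Finset.card_le_card hsub).trans_lt (Finset.card_lt_card hss)
    exact absurd h (not_le.mpr hlt)

/-- the growth function of the family of adaptive grid partitions with
`m = m0^d` cells satisfies `Δ*_{2n}(𝒜) ≤ ∏_{k=0}^{d-1} C(2n + m0, m0)^(m0^k)`, where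
`m0 = m^{1/d}`. -/
theorem stmt_16 (d m0 n : ℕ) (hd : 0 < d) (hm0 : 0 < m0)
    (𝒜 : Set (Set (Set (Fin d → ℝ)))) (h𝒜 : ∀ π ∈ 𝒜, IsAdaptiveGrid d m0 π)
    (B : Finset (Fin d → ℝ)) (hB : B.card = 2 * n) :
    Set.ncard {Q : Set (Set (Fin d → ℝ)) |
        ∃ π ∈ 𝒜, Q = (fun A => A ∩ (B : Set (Fin d → ℝ))) '' π} ≤
      ∏ k ∈ Finset.range d, (Nat.choose (2 * n + m0) m0) ^ (m0 ^ k) := by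
  classical
  have key : {Q : Set (Set (Fin d → ℝ)) |
      ∃ π ∈ 𝒜, Q = (fun A => A ∩ (B : Set (Fin d → ℝ))) '' π}
      ⊆ reconstruct d m0 n B '' Set.univ := by
    rintro Q ⟨π, hπ, rfl⟩
    obtain ⟨L, U, hdep, hbot, htop, hcons, hleq, rfl⟩ := h𝒜 π hπ
    -- `U` is monotone along the slice index
    have hUmono : ∀ (k : Fin d) (p : Fin (k : ℕ) → Fin m0) (j j' : Fin m0),
        (j : ℕ) ≤ (j' : ℕ) → U k (extFn k p j) ≤ U k (extFn k p j') := by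
      intro k p j j' hle'
      obtain ⟨t, ht⟩ := Nat.exists_eq_add_of_le hle'
      clear hle'
      induction t generalizing j' with
      | zero =>
        have : j = j' := Fin.ext (by omega)
        subst this
        exact le_refl _
      | succ t ih =>
        have hjm : (j : ℕ) + t < m0 := by have := j'.isLt; omega
        have h1 : U k (extFn k p j) ≤ U k (extFn k p ⟨(j : ℕ) + t, hjm⟩) := ih _ rfl
        have h2 : U k (extFn k p ⟨(j : ℕ) + t, hjm⟩) = L k (extFn k p j') := by
          apply hcons
          · intro i hi
            have hik : (i : ℕ) < (k : ℕ) := hi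
            simp only [extFn, dif_pos hik]
          · have hkk : ¬ ((k : ℕ) < (k : ℕ)) := lt_irrefl _
            simp only [extFn, dif_neg hkk]
            omega
        exact h1.trans (h2 ▸ hleq k (extFn k p j'))
    -- the counts
    set cnt : (k : Fin d) → (Fin (k : ℕ) → Fin m0) → Fin m0 → ℕ :=
      fun k p j => (B.filter fun y => (y k : EReal) ≤ U k (extFn k p j)).card with hcnt
    have hcntle : ∀ k p j, cnt k p j < 2 * n + 1 := by
      intro k p j
      have h := Finset.card_filter_le B (fun y => (y k : EReal) ≤ U k (extFn k p j))
      rw [hB] at h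
      exact Nat.lt_succ_of_le h
    have hcntmono : ∀ k p, ∀ j j' : Fin m0, j ≤ j' → cnt k p j ≤ cnt k p j' := by
      intro k p j j' hjj'
      apply Finset.card_le_card
      apply Finset.monotone_filter_right
      intro y _ hy
      exact le_trans hy (hUmono k p j j' hjj')
    -- the `U`-dependence facts
    have hUeq : ∀ (k : Fin d) (κ : Fin d → Fin m0), U k κ = U k (extFn k (preFn κ k) (κ k)) := by
      intro k κ
      refine (hdep k κ _ ?_).2
      intro i hi
      by_cases h : (i : ℕ) < (k : ℕ)
      · simp only [extFn, preFn, dif_pos h]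
      · have hik : i = k := le_antisymm hi (not_lt.mp h)
        subst hik
        simp only [extFn, dif_neg h]
    have hLeq : ∀ (k : Fin d) (κ : Fin d → Fin m0) (j : Fin m0),
        (j : ℕ) + 1 = (κ k : ℕ) → U k (extFn k (preFn κ k) j) = L k κ := by
      intro k κ j hj
      apply hcons
      · intro i hi
        have hik : (i : ℕ) < (k : ℕ) := hi
        simp only [extFn, preFn, dif_pos hik]
      · have hkk : ¬ ((k : ℕ) < (k : ℕ)) := lt_irrefl _
        simp only [extFn, dif_neg hkk]
        omega
    refine ⟨fun k p => ⟨fun j => ⟨cnt k p j, hcntle k p j⟩, ?_⟩, trivial, ?_⟩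
    · intro j j' hjj'
      exact Fin.mk_le_mk.mpr (hcntmono k p j j' hjj')
    -- the trace of the partition is reconstructed from the counts
    symm
    rw [← Set.range_comp, reconstruct]
    refine congrArg Set.range (funext fun κ => ?_)
    apply Set.ext
    intro x
    simp only [Function.comp_apply, Set.mem_inter_iff, Set.mem_setOf_eq, Finset.mem_coe]
    constructor
    · rintro ⟨hcell, hx⟩
      refine ⟨hx, fun k => ?_⟩
      obtain ⟨hL, hU⟩ := hcell k
      constructor
      · exact (rank_le_iff B k _ hx).mp ((hUeq k κ) ▸ hU)
      · intro j hj hcon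
        have hxu : (x k : EReal) ≤ U k (extFn k (preFn κ k) j) :=
          (rank_le_iff B k _ hx).mpr hcon
        rw [hLeq k κ j hj] at hxu
        exact absurd hL (not_lt.mpr hxu)
    · rintro ⟨hx, hcond⟩
      refine ⟨fun k => ?_, hx⟩
      obtain ⟨h1, h2⟩ := hcond k
      have hU : (x k : EReal) ≤ U k κ := by
        rw [hUeq k κ]
        exact (rank_le_iff B k _ hx).mpr h1
      refine ⟨?_, hU⟩
      rcases hκk : (κ k : ℕ) with _ | m
      · rw [hbot k κ hκk]
        exact EReal.bot_lt_coe _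
      · have hm : m < m0 := by
          have h := (κ k).isLt
          rw [hκk] at h
          exact Nat.lt_of_succ_lt h
        have hnot : ¬ ((x k : EReal) ≤ U k (extFn k (preFn κ k) ⟨m, hm⟩)) := by
          intro hcon
          exact h2 ⟨m, hm⟩ (by simp [hκk]) ((rank_le_iff B k _ hx).mp hcon)
        rw [hLeq k κ ⟨m, hm⟩ (by simp [hκk])] at hnot
        exact not_le.mp hnot
  -- counting
  have hfin : (reconstruct d m0 n B '' Set.univ).Finite := Set.Finite.image _ Set.finite_univ
  calc Set.ncard {Q : Set (Set (Fin d → ℝ)) |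
        ∃ π ∈ 𝒜, Q = (fun A => A ∩ (B : Set (Fin d → ℝ))) '' π}
      ≤ Set.ncard (reconstruct d m0 n B '' Set.univ) := Set.ncard_le_ncard key hfin
    _ ≤ Set.ncard (Set.univ : Set (∀ k : Fin d,
          (Fin (k : ℕ) → Fin m0) → {c : Fin m0 → Fin (2 * n + 1) // Monotone c})) :=
        Set.ncard_image_le Set.finite_univ
    _ = Fintype.card (∀ k : Fin d,
          (Fin (k : ℕ) → Fin m0) → {c : Fin m0 → Fin (2 * n + 1) // Monotone c}) := by
        rw [Set.ncard_univ, Nat.card_eq_fintype_card]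
    _ ≤ ∏ k ∈ Finset.range d, (Nat.choose (2 * n + m0) m0) ^ (m0 ^ k) := by
        rw [Fintype.card_pi]
        rw [← Fin.prod_univ_eq_prod_range
          (fun k => (Nat.choose (2 * n + m0) m0) ^ (m0 ^ k)) d]
        apply Finset.prod_le_prod'
        intro k _
        have h1 : Fintype.card ((Fin (k : ℕ) → Fin m0) →
            {c : Fin m0 → Fin (2 * n + 1) // Monotone c})
            = (Fintype.card {c : Fin m0 → Fin (2 * n + 1) // Monotone c}) ^ (m0 ^ (k : ℕ)) := by
          rw [Fintype.card_fun, Fintype.card_fun, Fintype.card_fin, Fintype.card_fin]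
        rw [h1]
        exact Nat.pow_le_pow_left (monoCard_le m0 (2 * n)) _
end
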